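/- (Positivity of the integrating factor SSPRK3 scheme.) Let X be a type (the grid) and R : (X → ℝ⁶) → (X → ℝ⁶). Suppose Δt* > 0 is such that for every grid function u with u(i) ∈ U_ad for all i ∈ X and every Δt with 0 < Δt ≤ Δt*, the forward Euler update satisfies (u + Δt·R(u))(i) ∈ U_ad for all i. Fix â, b̂ ∈ ℝ and 0 < Δt ≤ Δt*, and let E₁ = Exp(â, b̂), E_{1/2} = Exp(â/2, b̂/2), E_{−1/2} = Exp(−â/2, −b̂/2), acting on grid functions pointwise by matrix–vector multiplication. Given uⁿ with uⁿ(i) ∈ U_ad for all i, define u¹ = E₁·(uⁿ + Δt·R(uⁿ)), u² = (3/4)·E_{1/2}·uⁿ + (1/4)·E_{−1/2}·(u¹ + Δt·R(u¹)), and uⁿ⁺¹ = (1/3)·E₁·uⁿ + (2/3)·E_{1/2}·(u² + Δt·R(u²)). Then u¹(i), u²(i) and uⁿ⁺¹(i) all belong to U_ad for every i ∈ X. -/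

import Mathlib

noncomputable section

/-- Density of a Ten-Moment state. -/
def rho (u : Fin 6 → ℝ) : ℝ := u 0

/-- First velocity component. -/
def v1 (u : Fin 6 → ℝ) : ℝ := u 1 / u 0

/-- Second velocity component. -/
def v2 (u : Fin 6 → ℝ) : ℝ := u 2 / u 0

/-- Pressure component `p₁₁`. -/
def p11 (u : Fin 6 → ℝ) : ℝ := 2 * u 3 - (u 1) ^ 2 / u 0

/-- Pressure component `p₁₂`. -/
def p12 (u : Fin 6 → ℝ) : ℝ := 2 * u 4 - u 1 * u 2 / u 0

/-- Pressure component `p₂₂`. -/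
def p22 (u : Fin 6 → ℝ) : ℝ := 2 * u 5 - (u 2) ^ 2 / u 0

/-- The admissible set: positive density and positive definite pressure tensor. -/
def Uad : Set (Fin 6 → ℝ) :=
  {u | 0 < rho u ∧ 0 < p11 u ∧ 0 < p11 u * p22 u - (p12 u) ^ 2}

/-- The explicit exponential matrix of the source operator. -/
def ExpM (a b : ℝ) : Matrix (Fin 6) (Fin 6) ℝ :=
  !![1, 0, 0, 0, 0, 0;
     a, 1, 0, 0, 0, 0;
     b, 0, 1, 0, 0, 0;
     a ^ 2 / 2, a, 0, 1, 0, 0;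
     a * b / 2, b / 2, a / 2, 0, 1, 0;
     b ^ 2 / 2, 0, b, 0, 0, 1]




@[simp]
lemma cons_val_five {α : Type*} {m : ℕ} (x : α) (u : Fin m.succ.succ.succ.succ.succ → α) :
    Matrix.vecCons x u 5 =
      Matrix.vecHead (Matrix.vecTail (Matrix.vecTail (Matrix.vecTail (Matrix.vecTail u)))) :=
  rfl

lemma expM_mulVec (a b : ℝ) (u : Fin 6 → ℝ) :
    (ExpM a b).mulVec u = ![u 0, a * u 0 + u 1, b * u 0 + u 2,
      a ^ 2 / 2 * u 0 + a * u 1 + u 3,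
      a * b / 2 * u 0 + b / 2 * u 1 + a / 2 * u 2 + u 4,
      b ^ 2 / 2 * u 0 + b * u 2 + u 5] := by
  funext j
  fin_cases j <;>
    simp [ExpM, Matrix.mulVec, dotProduct, Fin.sum_univ_six, Matrix.vecHead, Matrix.vecTail] <;> ring

lemma expM_mem (a b : ℝ) {u : Fin 6 → ℝ} (hu : u ∈ Uad) :
    (ExpM a b).mulVec u ∈ Uad := by
  obtain ⟨h0, h1, h2⟩ := hu
  rw [expM_mulVec]
  have h0' : rho u = u 0 := rfl
  have hne : u 0 ≠ 0 := ne_of_gt h0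
  refine ⟨h0, ?_, ?_⟩
  · have : p11 ![u 0, a * u 0 + u 1, b * u 0 + u 2,
      a ^ 2 / 2 * u 0 + a * u 1 + u 3,
      a * b / 2 * u 0 + b / 2 * u 1 + a / 2 * u 2 + u 4,
      b ^ 2 / 2 * u 0 + b * u 2 + u 5] = p11 u := by
      simp only [p11, Matrix.cons_val_zero, Matrix.cons_val_one, Matrix.head_cons,
        Matrix.cons_val_three, Matrix.head_fin_const, Matrix.tail_cons]
      field_simp
      ring
    rw [this]; exact h1
  · have e11 : p11 ![u 0, a * u 0 + u 1, b * u 0 + u 2,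
      a ^ 2 / 2 * u 0 + a * u 1 + u 3,
      a * b / 2 * u 0 + b / 2 * u 1 + a / 2 * u 2 + u 4,
      b ^ 2 / 2 * u 0 + b * u 2 + u 5] = p11 u := by
      simp only [p11, Matrix.cons_val_zero, Matrix.cons_val_one, Matrix.head_cons,
        Matrix.cons_val_three, Matrix.head_fin_const, Matrix.tail_cons]
      field_simp; ring
    have e12 : p12 ![u 0, a * u 0 + u 1, b * u 0 + u 2,
      a ^ 2 / 2 * u 0 + a * u 1 + u 3,
      a * b / 2 * u 0 + b / 2 * u 1 + a / 2 * u 2 + u 4,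
      b ^ 2 / 2 * u 0 + b * u 2 + u 5] = p12 u := by
      simp only [p12]
      simp [Matrix.cons_val_zero, Matrix.cons_val_one]
      field_simp; ring
    have e22 : p22 ![u 0, a * u 0 + u 1, b * u 0 + u 2,
      a ^ 2 / 2 * u 0 + a * u 1 + u 3,
      a * b / 2 * u 0 + b / 2 * u 1 + a / 2 * u 2 + u 4,
      b ^ 2 / 2 * u 0 + b * u 2 + u 5] = p22 u := by
      simp only [p22]
      simp [Matrix.cons_val_zero]
      field_simp; ring
    rw [e11, e12, e22]; exact h2




lemma pos_of_mul_pos' {P c : ℝ} (hc : 0 < c) (h : 0 < P * c) : 0 < P := by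
  by_contra hP; push_neg at hP; nlinarith

lemma quad_aux {A B C A' B' C' w1 w2 α β : ℝ}
    (hA : 0 < A) (hD : 0 < A * C - B ^ 2) (hA' : 0 < A') (hD' : 0 < A' * C' - B' ^ 2)
    (hα : 0 < α) (hβ : 0 < β) :
    0 < (α * A + β * A' + w1 ^ 2) * (α * C + β * C' + w2 ^ 2)
        - (α * B + β * B' + w1 * w2) ^ 2 := by
  have hC : 0 < C := by nlinarith
  have hC' : 0 < C' := by nlinarith
  have cross : 0 ≤ A * C' + A' * C - 2 * (B * B') := by
    nlinarith [sq_nonneg (A' * B - A * B'), mul_pos hA hA',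
      mul_nonneg (sq_nonneg A') hD.le, mul_nonneg (sq_nonneg A) hD'.le]
  have q1 : 0 ≤ A * w2 ^ 2 - 2 * B * (w1 * w2) + C * w1 ^ 2 := by
    nlinarith [sq_nonneg (A * w2 - B * w1), mul_nonneg hD.le (sq_nonneg w1)]
  have q2 : 0 ≤ A' * w2 ^ 2 - 2 * B' * (w1 * w2) + C' * w1 ^ 2 := by
    nlinarith [sq_nonneg (A' * w2 - B' * w1), mul_nonneg hD'.le (sq_nonneg w1)]
  nlinarith [mul_pos (mul_pos hα hα) hD, mul_pos (mul_pos hβ hβ) hD',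
    mul_nonneg (mul_pos hα hβ).le cross,
    mul_nonneg hα.le q1, mul_nonneg hβ.le q2]

lemma add_mem_Uad {u v : Fin 6 → ℝ} (hu : u ∈ Uad) (hv : v ∈ Uad) : u + v ∈ Uad := by
  obtain ⟨hu0, hu1, hu2⟩ := hu
  obtain ⟨hv0, hv1, hv2⟩ := hv
  have ha : (0:ℝ) < u 0 := hu0
  have hb : (0:ℝ) < v 0 := hv0
  have hab : (0:ℝ) < u 0 + v 0 := by linarith
  set A := 2 * u 3 * u 0 - u 1 ^ 2 with hAdef
  set B := 2 * u 4 * u 0 - u 1 * u 2 with hBdef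
  set C := 2 * u 5 * u 0 - u 2 ^ 2 with hCdef
  set A' := 2 * v 3 * v 0 - v 1 ^ 2 with hA'def
  set B' := 2 * v 4 * v 0 - v 1 * v 2 with hB'def
  set C' := 2 * v 5 * v 0 - v 2 ^ 2 with hC'def
  have hpu1 : p11 u = A / u 0 := by rw [p11, hAdef]; field_simp
  have hpu2 : p12 u = B / u 0 := by rw [p12, hBdef]; field_simp
  have hpu3 : p22 u = C / u 0 := by rw [p22, hCdef]; field_simp
  have hpv1 : p11 v = A' / v 0 := by rw [p11, hA'def]; field_simp
  have hpv2 : p12 v = B' / v 0 := by rw [p12, hB'def]; field_simp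
  have hpv3 : p22 v = C' / v 0 := by rw [p22, hC'def]; field_simp
  have hA : 0 < A := by
    rw [hpu1] at hu1
    have := mul_pos hu1 ha; rwa [div_mul_cancel₀ _ ha.ne'] at this
  have hA' : 0 < A' := by
    rw [hpv1] at hv1
    have := mul_pos hv1 hb; rwa [div_mul_cancel₀ _ hb.ne'] at this
  have hD : 0 < A * C - B ^ 2 := by
    rw [hpu1, hpu3, hpu2] at hu2
    have h2 : 0 < (A * C - B ^ 2) / u 0 ^ 2 := by
      have : A / u 0 * (C / u 0) - (B / u 0) ^ 2 = (A * C - B ^ 2) / u 0 ^ 2 := by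
        field_simp; try ring
      rwa [this] at hu2
    have := mul_pos h2 (pow_pos ha 2)
    rwa [div_mul_cancel₀ _ (pow_pos ha 2).ne'] at this
  have hD' : 0 < A' * C' - B' ^ 2 := by
    rw [hpv1, hpv3, hpv2] at hv2
    have h2 : 0 < (A' * C' - B' ^ 2) / v 0 ^ 2 := by
      have : A' / v 0 * (C' / v 0) - (B' / v 0) ^ 2 = (A' * C' - B' ^ 2) / v 0 ^ 2 := by
        field_simp; try ring
      rwa [this] at hv2
    have := mul_pos h2 (pow_pos hb 2)
    rwa [div_mul_cancel₀ _ (pow_pos hb 2).ne'] at this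
  set α := v 0 * (u 0 + v 0) with hαdef
  set β := u 0 * (u 0 + v 0) with hβdef
  have hα : 0 < α := mul_pos hb hab
  have hβ : 0 < β := mul_pos ha hab
  set w1 := v 0 * u 1 - u 0 * v 1 with hw1def
  set w2 := v 0 * u 2 - u 0 * v 2 with hw2def
  set As := 2 * (u 3 + v 3) * (u 0 + v 0) - (u 1 + v 1) ^ 2 with hAsdef
  set Bs := 2 * (u 4 + v 4) * (u 0 + v 0) - (u 1 + v 1) * (u 2 + v 2) with hBsdef
  set Cs := 2 * (u 5 + v 5) * (u 0 + v 0) - (u 2 + v 2) ^ 2 with hCsdef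
  have idA : As * (u 0 * v 0) = α * A + β * A' + w1 ^ 2 := by
    simp only [hAsdef, hAdef, hA'def, hαdef, hβdef, hw1def]; ring
  have idB : Bs * (u 0 * v 0) = α * B + β * B' + w1 * w2 := by
    simp only [hBsdef, hBdef, hB'def, hαdef, hβdef, hw1def, hw2def]; ring
  have idC : Cs * (u 0 * v 0) = α * C + β * C' + w2 ^ 2 := by
    simp only [hCsdef, hCdef, hC'def, hαdef, hβdef, hw2def]; ring
  have hAs : 0 < As := by
    refine pos_of_mul_pos' (mul_pos ha hb) ?_
    rw [idA]; positivity
  have hdet : 0 < As * Cs - Bs ^ 2 := by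
    refine pos_of_mul_pos' (pow_pos (mul_pos ha hb) 2) ?_
    have : (As * Cs - Bs ^ 2) * (u 0 * v 0) ^ 2
        = (As * (u 0 * v 0)) * (Cs * (u 0 * v 0)) - (Bs * (u 0 * v 0)) ^ 2 := by ring
    rw [this, idA, idB, idC]
    exact quad_aux hA hD hA' hD' hα hβ
  have hw : ∀ k : Fin 6, (u + v) k = u k + v k := fun k => rfl
  refine ⟨hab, ?_, ?_⟩
  · show 0 < p11 (u + v)
    have : p11 (u + v) = As / (u 0 + v 0) := by
      simp only [p11, hw, hAsdef]; field_simp; try ring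
    rw [this]; exact div_pos hAs hab
  · have e1 : p11 (u + v) = As / (u 0 + v 0) := by
      simp only [p11, hw, hAsdef]; field_simp; try ring
    have e2 : p12 (u + v) = Bs / (u 0 + v 0) := by
      simp only [p12, hw, hBsdef]; field_simp; try ring
    have e3 : p22 (u + v) = Cs / (u 0 + v 0) := by
      simp only [p22, hw, hCsdef]; field_simp; try ring
    show 0 < p11 (u+v) * p22 (u+v) - p12 (u+v) ^ 2
    rw [e1, e2, e3]
    have : As / (u 0 + v 0) * (Cs / (u 0 + v 0)) - (Bs / (u 0 + v 0)) ^ 2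
        = (As * Cs - Bs ^ 2) / (u 0 + v 0) ^ 2 := by field_simp; try ring
    rw [this]
    exact div_pos hdet (pow_pos hab 2)

lemma smul_mem_Uad {s : ℝ} (hs : 0 < s) {u : Fin 6 → ℝ} (hu : u ∈ Uad) : s • u ∈ Uad := by
  obtain ⟨hu0, hu1, hu2⟩ := hu
  have ha : (0:ℝ) < u 0 := hu0
  have hw : ∀ k : Fin 6, (s • u) k = s * u k := fun k => rfl
  have e1 : p11 (s • u) = s * p11 u := by
    simp only [p11, hw]; field_simp; try ring
  have e2 : p12 (s • u) = s * p12 u := by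
    simp only [p12, hw]; field_simp; try ring
  have e3 : p22 (s • u) = s * p22 u := by
    simp only [p22, hw]; field_simp; try ring
  refine ⟨mul_pos hs ha, ?_, ?_⟩
  · show 0 < p11 (s • u); rw [e1]; exact mul_pos hs hu1
  · show 0 < p11 (s • u) * p22 (s • u) - p12 (s • u) ^ 2
    rw [e1, e2, e3]
    have : s * p11 u * (s * p22 u) - (s * p12 u) ^ 2
        = s ^ 2 * (p11 u * p22 u - p12 u ^ 2) := by ring
    rw [this]; exact mul_pos (pow_pos hs 2) hu2

/-- Positivity of the integrating factor SSPRK3 scheme: if the forward Euler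
update is positivity preserving for all time steps `0 < Δt ≤ Δt*`, then all the
stages of the integrating factor SSPRK3 scheme are positivity preserving. -/
theorem ifSSPRK3_positivity (X : Type*) (R : (X → Fin 6 → ℝ) → (X → Fin 6 → ℝ))
    (dtstar : ℝ) (hdtstar : 0 < dtstar)
    (hFE : ∀ u : X → Fin 6 → ℝ, (∀ i, u i ∈ Uad) →
      ∀ dt : ℝ, 0 < dt → dt ≤ dtstar → ∀ i, u i + dt • R u i ∈ Uad)
    (a b dt : ℝ) (hdt0 : 0 < dt) (hdt : dt ≤ dtstar)
    (un : X → Fin 6 → ℝ) (hun : ∀ i, un i ∈ Uad)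
    (u1 u2 u3 : X → Fin 6 → ℝ)
    (hu1 : u1 = fun i => (ExpM a b).mulVec (un i + dt • R un i))
    (hu2 : u2 = fun i => (3 / 4 : ℝ) • (ExpM (a / 2) (b / 2)).mulVec (un i)
      + (1 / 4 : ℝ) • (ExpM (-(a / 2)) (-(b / 2))).mulVec (u1 i + dt • R u1 i))
    (hu3 : u3 = fun i => (1 / 3 : ℝ) • (ExpM a b).mulVec (un i)
      + (2 / 3 : ℝ) • (ExpM (a / 2) (b / 2)).mulVec (u2 i + dt • R u2 i)) :
    (∀ i, u1 i ∈ Uad) ∧ (∀ i, u2 i ∈ Uad) ∧ (∀ i, u3 i ∈ Uad) := by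
  subst hu1 hu2 hu3
  have h1 : ∀ i, (fun i => (ExpM a b).mulVec (un i + dt • R un i)) i ∈ Uad := by
    intro i
    exact expM_mem a b (hFE un hun dt hdt0 hdt i)
  have h2 : ∀ i, (fun i => (3 / 4 : ℝ) • (ExpM (a / 2) (b / 2)).mulVec (un i)
      + (1 / 4 : ℝ) • (ExpM (-(a / 2)) (-(b / 2))).mulVec
        ((fun i => (ExpM a b).mulVec (un i + dt • R un i)) i
          + dt • R (fun i => (ExpM a b).mulVec (un i + dt • R un i)) i)) i ∈ Uad := by
    intro i
    exact add_mem_Uad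
      (smul_mem_Uad (by norm_num) (expM_mem _ _ (hun i)))
      (smul_mem_Uad (by norm_num) (expM_mem _ _ (hFE _ h1 dt hdt0 hdt i)))
  refine ⟨h1, h2, fun i => ?_⟩
  exact add_mem_Uad
    (smul_mem_Uad (by norm_num) (expM_mem _ _ (hun i)))
    (smul_mem_Uad (by norm_num) (expM_mem _ _ (hFE _ h2 dt hdt0 hdt i)))
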